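/- Every fractal necklace F in ℝ^d is locally path-connected: for each z ∈ F and each m ≥ 1, the union of all m-level copies of F containing z is a path-connected neighborhood of z in F, and these form a neighborhood basis at z. -/

import Mathlib

open Set Topology Metric Bornology

noncomputable section

/-- Euclidean space `ℝ^d`. -/
abbrev Euc (d : ℕ) := EuclideanSpace ℝ (Fin d)

/-- A fractal necklace in `ℝ^d`: the attractor `F` of a necklace IFS `f_1, …, f_n`
(`n ≥ 3`) of contractive homeomorphisms of `ℝ^d`, where cyclically adjacent 1-level
copies meet in a single point (a main node `z k`) and non-adjacent copies are disjoint. -/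
structure Necklace (d : ℕ) where
  n : ℕ
  hn : 3 ≤ n
  f : Fin n → (Euc d ≃ₜ Euc d)
  contr : ∀ k, ∃ c : NNReal, c < 1 ∧ LipschitzWith c (f k)
  F : Set (Euc d)
  Fne : F.Nonempty
  Fcpt : IsCompact F
  Fattr : F = ⋃ k, (f k) '' F
  z : Fin n → Euc d
  hz : ∀ k : Fin n, (f k) '' F ∩ (f (k + ⟨1, by omega⟩)) '' F = {z k}
  hdisj : ∀ m k : Fin n, m ≠ k → m ≠ k + ⟨1, by omega⟩ → k ≠ m + ⟨1, by omega⟩ →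
    (f m) '' F ∩ (f k) '' F = ∅

namespace Necklace

variable {d : ℕ}

/-- The digit `1` of `Fin n`. -/
def one (N : Necklace d) : Fin N.n := ⟨1, by have := N.hn; omega⟩

/-- The homeomorphism `f_σ = f_{i₁} ∘ ⋯ ∘ f_{i_m}` associated to a word `σ = i₁⋯i_m`. -/
def word (N : Necklace d) : List (Fin N.n) → (Euc d ≃ₜ Euc d)
  | [] => Homeomorph.refl _
  | i :: s => (N.word s).trans (N.f i)

/-- The copy `F_σ = f_σ(F)` of the necklace. -/
def copy (N : Necklace d) (σ : List (Fin N.n)) : Set (Euc d) := N.word σ '' N.F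

/-- `c_m(x)`: the number of words `σ` of length `m` with `x ∈ F_σ`. -/
def cnt (N : Necklace d) (m : ℕ) (x : Euc d) : ℕ :=
  Set.ncard {σ : List (Fin N.n) | σ.length = m ∧ x ∈ N.copy σ}

/-- The boundary `∂_F F_k = {z_{k-1}, z_k}` of the 1-level copy `F_k` in `F`. -/
def bdry (N : Necklace d) (k : Fin N.n) : Set (Euc d) := {N.z (k - N.one), N.z k}

/-- A necklace is stable if for each `k` at least two second-level copies `F_{kj}`
meet `∂_F F_k`. -/
def Stable (N : Necklace d) : Prop :=
  ∀ k : Fin N.n,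
    2 ≤ Set.ncard {A : Set (Euc d) |
      (∃ j : Fin N.n, A = N.f k '' (N.f j '' N.F)) ∧ (A ∩ N.bdry k).Nonempty}

/-- A necklace is good if `∂_F F_k` is not contained in any second-level copy `F_{kj}`. -/
def Good (N : Necklace d) : Prop :=
  ∀ k j : Fin N.n, ¬ (N.bdry k ⊆ N.f k '' (N.f j '' N.F))

/-- A necklace is of bounded ramification if `{c_m(z_k)}_m` is bounded for each `k`. -/
def BoundedRamification (N : Necklace d) : Prop :=
  ∀ k : Fin N.n, ∃ C : ℕ, ∀ m : ℕ, N.cnt m (N.z k) ≤ C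

/-- `M_F`: the set of points that are main nodes of some copy of `F`. -/
def MF (N : Necklace d) : Set (Euc d) :=
  {x | ∃ (σ : List (Fin N.n)) (k : Fin N.n), x = N.word σ (N.z k)}

/-- A necklace has no cut points if `F \ {x}` is connected for every `x ∈ F`. -/
def NoCutPoints (N : Necklace d) : Prop :=
  ∀ x ∈ N.F, IsConnected (N.F \ {x})

/-- Property I: each 1-level copy `F_k` has an arc from `z_{k-1}` to `z_k` passing
through at least two main nodes of `F_k`. -/
def PropertyI (N : Necklace d) : Prop :=
  ∀ k : Fin N.n, ∃ γ : Path (N.z (k - N.one)) (N.z k),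
    Function.Injective γ ∧ (∀ t, γ t ∈ N.f k '' N.F) ∧
    ∃ p q : Euc d, p ≠ q ∧ (∃ j, p = N.f k (N.z j)) ∧ (∃ j, q = N.f k (N.z j)) ∧
      p ∈ Set.range γ ∧ q ∈ Set.range γ

/-- A necklace is self-similar if the maps of its NIFS are (contractive) similitudes. -/
def SelfSimilar (N : Necklace d) : Prop :=
  ∀ k : Fin N.n, ∃ c : ℝ, 0 < c ∧ c < 1 ∧ ∀ x y, dist (N.f k x) (N.f k y) = c * dist x y

/-- The open set condition for the NIFS of a necklace. -/
def OSC (N : Necklace d) : Prop :=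
  ∃ V : Set (Euc d), V.Nonempty ∧ IsOpen V ∧ IsBounded V ∧
    (∀ k, N.f k '' V ⊆ V) ∧ ∀ j k : Fin N.n, j ≠ k → N.f j '' V ∩ N.f k '' V = ∅

end Necklace

/-- The union of all `m`-level copies of `F` containing the point `x`. -/
def Necklace.copiesNbhd {d : ℕ} (N : Necklace d) (x : Euc d) (m : ℕ) : Set (Euc d) :=
  ⋃ σ ∈ {σ : List (Fin N.n) | σ.length = m ∧ x ∈ N.copy σ}, N.copy σ


/-! Any two points of `F` are linked by a chain of first-level copies `F_k`, consecutive ones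
meeting at a main node `z_k`; applying `f_σ` gives a chain of `(m+1)`-level copies inside each
`m`-level copy `F_σ`. Refining such chains level by level, and joining the two points of each link
by a segment, gives paths that converge uniformly (the diameters of `m`-level copies decay like
`r^m`) to a path inside `F_σ`, so every copy is path-connected. Near `z`, `F` is covered by the
copies through `z`, since the finitely many other `m`-level copies form a compact set missing `z`;
and their diameters tend to `0`. -/

open Filter

theorem IsPathConnected.biUnion_of_forall_mem {ι X : Type*} [TopologicalSpace X] {S : Set ι}
    {s : ι → Set X} {x : X} (hS : S.Nonempty) (hx : ∀ i ∈ S, x ∈ s i)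
    (hs : ∀ i ∈ S, IsPathConnected (s i)) : IsPathConnected (⋃ i ∈ S, s i) := by
  obtain ⟨i₀, hi₀⟩ := hS
  refine ⟨x, mem_biUnion hi₀ (hx i₀ hi₀), fun y hy => ?_⟩
  obtain ⟨i, hi, hyi⟩ := mem_iUnion₂.1 hy
  exact ((hs i hi).joinedIn x (hx i hi) y hyi).mono (subset_biUnion_of_mem hi)

/-- `CellChain T a b`: sets `D₁, …, D_k ∈ T` and points `a ∈ D₁`, `b ∈ D_k`, with a
chosen point in each `D_i ∩ D_{i+1}`. -/
inductive CellChain {X : Type*} (T : Set (Set X)) : X → X → Type _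
  | single {a b : X} (D : Set X) (hD : D ∈ T) (ha : a ∈ D) (hb : b ∈ D) : CellChain T a b
  | cons {a b c : X} (D : Set X) (hD : D ∈ T) (ha : a ∈ D) (hb : b ∈ D)
      (tail : CellChain T b c) : CellChain T a c

namespace CellChain

variable {X Y : Type*} {T : Set (Set X)}

def map {T' : Set (Set Y)} (f : X → Y) (hf : ∀ D ∈ T, f '' D ∈ T') :
    ∀ {a b : X}, CellChain T a b → CellChain T' (f a) (f b)
  | _, _, single D hD ha hb => single (f '' D) (hf D hD) (mem_image_of_mem f ha)
      (mem_image_of_mem f hb)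
  | _, _, cons D hD ha hb tail => cons (f '' D) (hf D hD) (mem_image_of_mem f ha)
      (mem_image_of_mem f hb) (tail.map f hf)

open Fin.NatCast in
theorem nonempty_of_cyclic {n : ℕ} [NeZero n] (A : Fin n → Set X) (z : Fin n → X)
    (hzA : ∀ k, z k ∈ A k ∩ A (k + 1)) (hA : ∀ k, A k ∈ T) {i j : Fin n} {a b : X}
    (ha : a ∈ A i) (hb : b ∈ A j) : Nonempty (CellChain T a b) := by
  suffices h : ∀ (r : ℕ) (i : Fin n) (a : X), a ∈ A i → b ∈ A (i + (r : Fin n)) →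
      Nonempty (CellChain T a b) by
    exact h (j - i).val i a ha (by rwa [Fin.cast_val_eq_self, add_sub_cancel])
  intro r
  induction r with
  | zero =>
    intro i a ha hb
    rw [Nat.cast_zero, add_zero] at hb
    exact ⟨single (A i) (hA i) ha hb⟩
  | succ r ih =>
    intro i a ha hb
    rw [Nat.cast_succ, add_comm (r : Fin n), ← add_assoc] at hb
    obtain ⟨tail⟩ := ih (i + 1) (z i) (hzA i).2 hb
    exact ⟨cons (A i) (hA i) ha (hzA i).1 tail⟩

variable [TopologicalSpace X]

def path (g : ∀ D ∈ T, ∀ p q : X, p ∈ D → q ∈ D → Path p q) :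
    ∀ {a b : X}, CellChain T a b → Path a b
  | _, _, single D hD ha hb => g D hD _ _ ha hb
  | _, _, cons D hD ha hb tail => (g D hD _ _ ha hb).trans (tail.path g)

theorem path_apply_rel (g₁ g₂ : ∀ D ∈ T, ∀ p q : X, p ∈ D → q ∈ D → Path p q)
    (R : X → X → Prop)
    (hR : ∀ D hD p q hp hq t, R (g₁ D hD p q hp hq t) (g₂ D hD p q hp hq t))
    {a b : X} (c : CellChain T a b) (t : unitInterval) : R (c.path g₁ t) (c.path g₂ t) := by
  induction c generalizing t with
  | single D hD ha hb => exact hR D hD _ _ ha hb t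
  | cons D hD ha hb tail ih =>
    simp only [path, Path.trans_apply]
    split_ifs
    · exact hR D hD _ _ ha hb _
    · exact ih _

theorem path_apply_mem (g : ∀ D ∈ T, ∀ p q : X, p ∈ D → q ∈ D → Path p q) (S : Set X)
    (hS : ∀ D hD p q hp hq t, g D hD p q hp hq t ∈ S) {a b : X} (c : CellChain T a b)
    (t : unitInterval) : c.path g t ∈ S :=
  path_apply_rel g g (fun x _ => x ∈ S) hS c t

end CellChain

section Subdivision

open unitInterval

variable {E : Type*} [NormedAddCommGroup E] [NormedSpace ℝ E] (cells : ℕ → Set (Set E))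
  (hsub : ∀ m, ∀ C ∈ cells m, ∀ a ∈ C, ∀ b ∈ C,
    Nonempty (CellChain {D | D ∈ cells (m + 1) ∧ D ⊆ C} a b))

def chainApprox :
    ℕ → ∀ (m : ℕ), ∀ C ∈ cells m, ∀ a b : E, a ∈ C → b ∈ C → Path a b
  | 0, _, _, _, a, b, _, _ => Path.segment a b
  | j + 1, m, C, hC, a, b, ha, hb => (hsub m C hC a ha b hb).some.path
      fun D hD p q hp hq => chainApprox j (m + 1) D hD.1 p q hp hq

variable {ε : ℕ → ℝ} (hε : Antitone ε)
  (hdist : ∀ m, ∀ C ∈ cells m, ∀ x ∈ C, ∀ y ∈ C, dist x y ≤ ε m)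
include hdist

theorem exists_dist_chainApprox_le (j m : ℕ) (C : Set E) (hC : C ∈ cells m) (a b : E)
    (ha : a ∈ C) (hb : b ∈ C) (t : I) :
    ∃ y ∈ C, dist (chainApprox cells hsub j m C hC a b ha hb t) y ≤ ε (m + j) := by
  induction j generalizing m C a b t with
  | zero =>
    refine ⟨a, ha, ?_⟩
    rw [chainApprox, Path.segment_apply, dist_lineMap_left, Real.norm_eq_abs,
      abs_of_nonneg t.2.1]
    exact (mul_le_of_le_one_left dist_nonneg t.2.2).trans (hdist m C hC a ha b hb)
  | succ j ih =>
    rw [chainApprox]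
    refine CellChain.path_apply_mem _ {x | ∃ y ∈ C, dist x y ≤ ε (m + (j + 1))}
      (fun D hD p q hp hq t => ?_) _ t
    obtain ⟨y, hy, hdy⟩ := ih (m + 1) D hD.1 p q hp hq t
    exact ⟨y, hD.2 hy, by rwa [add_right_comm, add_assoc] at hdy⟩

include hε in
theorem dist_chainApprox_le {J j₁ j₂ : ℕ} (h₁ : J ≤ j₁) (h₂ : J ≤ j₂) (m : ℕ)
    (C : Set E) (hC : C ∈ cells m) (a b : E) (ha : a ∈ C) (hb : b ∈ C) (t : I) :
    dist (chainApprox cells hsub j₁ m C hC a b ha hb t)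
      (chainApprox cells hsub j₂ m C hC a b ha hb t) ≤ 3 * ε (m + J) := by
  induction J generalizing j₁ j₂ m C a b t with
  | zero =>
    obtain ⟨y₁, hy₁, hd₁⟩ :=
      exists_dist_chainApprox_le cells hsub hdist j₁ m C hC a b ha hb t
    obtain ⟨y₂, hy₂, hd₂⟩ :=
      exists_dist_chainApprox_le cells hsub hdist j₂ m C hC a b ha hb t
    have hε₁ : ε (m + j₁) ≤ ε m := hε (Nat.le_add_right m j₁)
    have hε₂ : ε (m + j₂) ≤ ε m := hε (Nat.le_add_right m j₂)
    calc _ ≤ dist (chainApprox cells hsub j₁ m C hC a b ha hb t) y₁ + dist y₁ y₂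
            + dist y₂ (chainApprox cells hsub j₂ m C hC a b ha hb t) := dist_triangle4 _ _ _ _
      _ ≤ 3 * ε (m + 0) := by
        rw [dist_comm y₂, add_zero]
        linarith [hdist m C hC y₁ hy₁ y₂ hy₂]
  | succ J ih =>
    obtain ⟨k₁, rfl⟩ : ∃ k, j₁ = k + 1 := ⟨j₁ - 1, by omega⟩
    obtain ⟨k₂, rfl⟩ : ∃ k, j₂ = k + 1 := ⟨j₂ - 1, by omega⟩
    -- both approximations run along the same chosen chain, so compare them link by link
    rw [chainApprox, chainApprox, ← add_assoc, Nat.add_right_comm]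
    refine CellChain.path_apply_rel _ _ (fun x y => dist x y ≤ 3 * ε (m + 1 + J))
      (fun D hD p q hp hq t => ?_) _ t
    exact ih (j₁ := k₁) (j₂ := k₂) (by omega) (by omega) (m + 1) D hD.1 p q hp hq t

include hε hsub in
theorem joinedIn_of_subdivision [CompleteSpace E] (hε₀ : Tendsto ε atTop (𝓝 0))
    (hclosed : ∀ m, ∀ C ∈ cells m, IsClosed C) {m : ℕ} {C : Set E} (hC : C ∈ cells m)
    {a b : E} (ha : a ∈ C) (hb : b ∈ C) : JoinedIn C a b := by
  let γ : ℕ → C(I, E) := fun j => chainApprox cells hsub j m C hC a b ha hb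
  have hεm : Tendsto (fun j => ε (m + j)) atTop (𝓝 0) :=
    hε₀.comp (by simpa only [add_comm] using tendsto_add_atTop_nat m)
  have hcauchy : CauchySeq γ := cauchySeq_of_le_tendsto_0 (fun J => 3 * ε (m + J))
    (fun j₁ j₂ J h₁ h₂ => ContinuousMap.dist_le_iff_of_nonempty.2
      (dist_chainApprox_le cells hsub hε hdist h₁ h₂ m C hC a b ha hb))
    (by simpa using hεm.const_mul 3)
  obtain ⟨g, hg⟩ := cauchySeq_tendsto_of_complete hcauchy
  have hγg (t : I) : Tendsto (fun j => γ j t) atTop (𝓝 (g t)) :=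
    ((continuous_eval_const t).tendsto g).comp hg
  refine ⟨⟨g, tendsto_nhds_unique (hγg 0) (by simp [γ]),
    tendsto_nhds_unique (hγg 1) (by simp [γ])⟩,
    fun t => (hclosed m C hC).closure_subset (Metric.mem_closure_iff.2 fun δ hδ => ?_)⟩
  obtain ⟨j, hjg, hjε⟩ := (((hγg t).eventually (ball_mem_nhds _ (half_pos hδ))).and
    (hεm.eventually (gt_mem_nhds (half_pos hδ)))).exists
  obtain ⟨y, hy, hdy⟩ := exists_dist_chainApprox_le cells hsub hdist j m C hC a b ha hb t
  refine ⟨y, hy, ?_⟩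
  calc dist (g t) y ≤ dist (γ j t) (g t) + dist (γ j t) y := dist_triangle_left _ _ _
    _ < δ := by change dist (γ j t) y ≤ _ at hdy; linarith

end Subdivision

namespace Necklace

variable {d : ℕ} (N : Necklace d)

instance : NeZero N.n := ⟨by have := N.hn; omega⟩

theorem image_f_subset (k : Fin N.n) : N.f k '' N.F ⊆ N.F :=
  (subset_iUnion (fun k => N.f k '' N.F) k).trans N.Fattr.symm.subset

theorem z_mem_inter (k : Fin N.n) : N.z k ∈ N.f k '' N.F ∩ N.f (k + 1) '' N.F := by
  have hone : (⟨1, by have := N.hn; omega⟩ : Fin N.n) = 1 :=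
    Fin.ext (Nat.mod_eq_of_lt (by have := N.hn; omega)).symm
  have h := N.hz k
  rw [hone] at h
  exact h ▸ mem_singleton _

theorem copy_nil : N.copy [] = N.F := image_id N.F

theorem copy_cons (i : Fin N.n) (σ : List (Fin N.n)) :
    N.copy (i :: σ) = N.f i '' N.copy σ :=
  (image_image (N.f i) (N.word σ) N.F).symm

theorem copy_append (σ τ : List (Fin N.n)) : N.copy (σ ++ τ) = N.word σ '' N.copy τ := by
  induction σ with
  | nil => exact (image_id _).symm
  | cons i σ ih => rw [List.cons_append, copy_cons, ih, image_image]; rfl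

theorem copy_subset (σ : List (Fin N.n)) : N.copy σ ⊆ N.F := by
  induction σ with
  | nil => exact N.copy_nil.subset
  | cons i σ ih =>
    exact (N.copy_cons i σ).trans_subset ((image_mono ih).trans (N.image_f_subset i))

theorem isCompact_copy (σ : List (Fin N.n)) : IsCompact (N.copy σ) :=
  N.Fcpt.image (N.word σ).continuous

theorem exists_mem_copy {x : Euc d} (hx : x ∈ N.F) (m : ℕ) :
    ∃ σ : List (Fin N.n), σ.length = m ∧ x ∈ N.copy σ := by
  induction m generalizing x with
  | zero => exact ⟨[], rfl, N.copy_nil.symm ▸ hx⟩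
  | succ m ih =>
    rw [N.Fattr, mem_iUnion] at hx
    obtain ⟨k, y, hy, rfl⟩ := hx
    obtain ⟨σ, hσ, hyσ⟩ := ih hy
    exact ⟨k :: σ, by rw [List.length_cons, hσ], N.copy_cons k σ ▸ mem_image_of_mem _ hyσ⟩

def cells (m : ℕ) : Set (Set (Euc d)) := N.copy '' {σ | σ.length = m}

def ratio : NNReal := Finset.univ.sup fun k => (N.contr k).choose

theorem ratio_lt_one : N.ratio < 1 :=
  (Finset.sup_lt_iff zero_lt_one).2 fun k _ => (N.contr k).choose_spec.1

theorem lipschitzWith_word (σ : List (Fin N.n)) :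
    LipschitzWith (N.ratio ^ σ.length) (N.word σ) := by
  induction σ with
  | nil => exact LipschitzWith.id
  | cons i σ ih =>
    rw [List.length_cons, pow_succ']
    exact ((N.contr i).choose_spec.2.weaken
      (Finset.le_sup (f := fun k => (N.contr k).choose) (Finset.mem_univ i))).comp ih

def diamBound (m : ℕ) : ℝ := (N.ratio : ℝ) ^ m * diam N.F

theorem antitone_diamBound : Antitone N.diamBound := fun _ _ h =>
  mul_le_mul_of_nonneg_right (pow_le_pow_of_le_one N.ratio.2 N.ratio_lt_one.le h) diam_nonneg

theorem tendsto_diamBound : Tendsto N.diamBound atTop (𝓝 0) := by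
  have h := (tendsto_pow_atTop_nhds_zero_of_lt_one N.ratio.2 N.ratio_lt_one).mul_const (diam N.F)
  rwa [zero_mul] at h

theorem dist_le_diamBound {σ : List (Fin N.n)} {x y : Euc d} (hx : x ∈ N.copy σ)
    (hy : y ∈ N.copy σ) : dist x y ≤ N.diamBound σ.length := by
  obtain ⟨u, hu, rfl⟩ := hx
  obtain ⟨v, hv, rfl⟩ := hy
  calc dist (N.word σ u) (N.word σ v) ≤ (N.ratio : ℝ) ^ σ.length * dist u v := by
        exact_mod_cast (N.lipschitzWith_word σ).dist_le_mul u v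
    _ ≤ N.diamBound σ.length :=
        mul_le_mul_of_nonneg_left (dist_le_diam_of_mem N.Fcpt.isBounded hu hv) (by positivity)

theorem nonempty_cellChain_of_mem {a b : Euc d} (ha : a ∈ N.F) (hb : b ∈ N.F) :
    Nonempty (CellChain (N.cells 1) a b) := by
  rw [N.Fattr, mem_iUnion] at ha hb
  obtain ⟨i, hi⟩ := ha
  obtain ⟨j, hj⟩ := hb
  refine CellChain.nonempty_of_cyclic (T := N.cells 1) (fun k => N.f k '' N.F) N.z N.z_mem_inter
    (fun k => ⟨[k], rfl, ?_⟩) hi hj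
  rw [copy_cons, copy_nil]

theorem cells_subdivision (m : ℕ) :
    ∀ C ∈ N.cells m, ∀ a ∈ C, ∀ b ∈ C,
      Nonempty (CellChain {D | D ∈ N.cells (m + 1) ∧ D ⊆ C} a b) := by
  rintro _ ⟨σ, hσ, rfl⟩ _ ⟨u, hu, rfl⟩ _ ⟨v, hv, rfl⟩
  obtain ⟨c⟩ := N.nonempty_cellChain_of_mem hu hv
  refine ⟨c.map (N.word σ) ?_⟩
  rintro _ ⟨τ, hτ, rfl⟩
  refine ⟨⟨σ ++ τ, ?_, N.copy_append σ τ⟩, image_mono (N.copy_subset τ)⟩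
  show (σ ++ τ).length = m + 1
  rw [List.length_append, hσ, hτ]

theorem isPathConnected_copy (σ : List (Fin N.n)) : IsPathConnected (N.copy σ) := by
  refine isPathConnected_iff.2 ⟨N.Fne.image _, fun a ha b hb => ?_⟩
  refine joinedIn_of_subdivision N.cells N.cells_subdivision N.antitone_diamBound ?_
    N.tendsto_diamBound ?_ ⟨σ, rfl, rfl⟩ ha hb
  · rintro m _ ⟨τ, rfl, rfl⟩ x hx y hy
    exact N.dist_le_diamBound hx hy
  · rintro m _ ⟨τ, -, rfl⟩
    exact (N.isCompact_copy τ).isClosed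

theorem copiesNbhd_subset (x : Euc d) (m : ℕ) : N.copiesNbhd x m ⊆ N.F :=
  iUnion₂_subset fun σ _ => N.copy_subset σ

theorem isPathConnected_copiesNbhd {x : Euc d} (hx : x ∈ N.F) (m : ℕ) :
    IsPathConnected (N.copiesNbhd x m) :=
  IsPathConnected.biUnion_of_forall_mem (N.exists_mem_copy hx m) (fun _ hσ => hσ.2)
    (fun σ _ => N.isPathConnected_copy σ)

theorem copiesNbhd_mem_nhdsWithin (x : Euc d) (m : ℕ) : N.copiesNbhd x m ∈ 𝓝[N.F] x := by
  set far := ⋃ σ ∈ {σ : List (Fin N.n) | σ.length = m ∧ x ∉ N.copy σ}, N.copy σ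
  have hfar : IsClosed far := Finite.isClosed_biUnion
    ((List.finite_length_eq (Fin N.n) m).subset fun σ hσ => hσ.1)
    fun σ _ => (N.isCompact_copy σ).isClosed
  have hxfar : x ∉ far := by
    simp only [far, mem_iUnion₂]
    rintro ⟨σ, ⟨-, hxσ⟩, hx⟩
    exact hxσ hx
  refine mem_nhdsWithin.2 ⟨farᶜ, hfar.isOpen_compl, hxfar, ?_⟩
  rintro y ⟨hyfar, hyF⟩
  obtain ⟨σ, hσ, hyσ⟩ := N.exists_mem_copy hyF m
  by_cases hxσ : x ∈ N.copy σ
  · exact mem_biUnion ⟨hσ, hxσ⟩ hyσ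
  · exact absurd (mem_iUnion₂.2 ⟨σ, ⟨hσ, hxσ⟩, hyσ⟩) hyfar

theorem hasBasis_copiesNbhd (x : Euc d) :
    (𝓝[N.F] x).HasBasis (fun m : ℕ => 1 ≤ m) (N.copiesNbhd x) := by
  refine nhdsWithin_basis_ball.to_hasBasis' (fun δ hδ => ?_)
    fun m _ => N.copiesNbhd_mem_nhdsWithin x m
  obtain ⟨m, hmδ, hm⟩ :=
    ((N.tendsto_diamBound.eventually (gt_mem_nhds hδ)).and (eventually_ge_atTop 1)).exists
  refine ⟨m, hm, fun y hy => ⟨?_, N.copiesNbhd_subset x m hy⟩⟩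
  obtain ⟨σ, ⟨hσ, hxσ⟩, hyσ⟩ := mem_iUnion₂.1 hy
  exact mem_ball.2 ((N.dist_le_diamBound hyσ hxσ).trans_lt (hσ ▸ hmδ))

theorem locallyPathConnectedSpace : LocallyPathConnectedSpace N.F :=
  .of_bases (fun x => nhds_subtype_eq_comap_nhdsWithin N.F x ▸ (N.hasBasis_copiesNbhd x).comap _)
    fun x m _ => (N.isPathConnected_copiesNbhd x.2 m).preimage_coe (N.copiesNbhd_subset x m)

end Necklace

/-- Every fractal necklace `F` in `ℝ^d` is locally path-connected: for each `z ∈ F` and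
each `m ≥ 1`, the union of all `m`-level copies of `F` containing `z` is a
path-connected neighborhood of `z` in `F`, and these sets form a neighborhood basis of
`z` in `F`. -/
theorem Necklace.locPathConnected {d : ℕ} (N : Necklace d) :
    LocPathConnectedSpace N.F ∧
    ∀ z ∈ N.F,
      (∀ m : ℕ, 1 ≤ m →
        IsPathConnected (N.copiesNbhd z m) ∧ N.copiesNbhd z m ∈ 𝓝[N.F] z) ∧
      (𝓝[N.F] z).HasBasis (fun m : ℕ => 1 ≤ m) (N.copiesNbhd z) :=
  ⟨N.locallyPathConnectedSpace, fun z hz =>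
    ⟨fun m _ => ⟨N.isPathConnected_copiesNbhd hz m, N.copiesNbhd_mem_nhdsWithin z m⟩,
      N.hasBasis_copiesNbhd z⟩⟩
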